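/- arXiv:1907.04228 — 3 statements merged into one kernel-verified Lean document; each statement's English description precedes it below -/
import Mathlib

section
/- Let n̄ > 0 be a real number and define t_k = n̄^k/(1+n̄)^{k+1} for k ∈ ℕ. Then ∑_{k=0}^∞ (k+1)·t_k·t_{k+1} · ∫₀¹ (s·t_k + (1−s))⁻² ds = n̄, and consequently (2/n̄²)·∑_{k=0}^∞ (k+1)·t_k·t_{k+1}·∫₀¹ (s·t_k+(1−s))⁻² ds − (2/n̄)·∑_{k=0}^∞ t_k²·∫₀¹ (s·t_k+(1−s))⁻² ds = 0. -/
/-! The integral has the antiderivative `s ↦ s / (s t + (1 - s))`, so it equals `1 / t_k`.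
After this cancellation both series are moments of the geometric distribution
`t_k = (1 - x) x^k` with `x = n̄ / (1 + n̄)`: the first is its mean `x / (1 - x) = n̄`, the
second its total mass `1`, and `(2 / n̄²) n̄ - (2 / n̄) 1 = 0`. -/

open intervalIntegral

theorem integral_inv_sq_affine {t : ℝ} (ht : 0 < t) :
    ∫ s in (0:ℝ)..1, ((s * t + (1 - s)) ^ 2)⁻¹ = t⁻¹ := by
  have hpos : ∀ s ∈ Set.uIcc (0:ℝ) 1, 0 < s * t + (1 - s) := by
    intro s hs
    rw [Set.uIcc_of_le zero_le_one] at hs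
    rcases hs.1.eq_or_lt with rfl | hs₀
    · norm_num
    · nlinarith [mul_pos hs₀ ht, hs.2]
  have hderiv : ∀ s ∈ Set.uIcc (0:ℝ) 1,
      HasDerivAt (fun s ↦ s / (s * t + (1 - s))) ((s * t + (1 - s)) ^ 2)⁻¹ s := by
    intro s hs
    have hne := (hpos s hs).ne'
    have hden : HasDerivAt (fun s : ℝ ↦ s * t + (1 - s)) (1 * t + (0 - 1)) s :=
      ((hasDerivAt_id' s).mul_const t).add ((hasDerivAt_const s 1).sub (hasDerivAt_id' s))
    refine ((hasDerivAt_id' s).div hden hne).congr_deriv ?_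
    field_simp
    ring
  have hcont : ContinuousOn (fun s : ℝ ↦ ((s * t + (1 - s)) ^ 2)⁻¹) (Set.uIcc 0 1) :=
    (by fun_prop : Continuous fun s : ℝ ↦ (s * t + (1 - s)) ^ 2).continuousOn.inv₀
      fun s hs ↦ pow_ne_zero 2 (hpos s hs).ne'
  rw [integral_eq_sub_of_hasDerivAt hderiv hcont.intervalIntegrable]
  simp

theorem hasSum_geometric_pmf {x : ℝ} (hx₀ : 0 ≤ x) (hx₁ : x < 1) :
    HasSum (fun k : ℕ ↦ (1 - x) * x ^ k) 1 := by
  have h := (hasSum_geometric_of_lt_one hx₀ hx₁).mul_left (1 - x)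
  rwa [mul_inv_cancel₀ (sub_pos.2 hx₁).ne'] at h

theorem hasSum_succ_mul_geometric_pmf_succ {x : ℝ} (hx₀ : 0 ≤ x) (hx₁ : x < 1) :
    HasSum (fun k : ℕ ↦ ((k : ℝ) + 1) * ((1 - x) * x ^ (k + 1))) (x / (1 - x)) := by
  have hx : 1 - x ≠ 0 := (sub_pos.2 hx₁).ne'
  have hmean := (hasSum_coe_mul_geometric_of_norm_lt_one
    (by rwa [Real.norm_of_nonneg hx₀] : ‖x‖ < 1)).mul_left (1 - x)
  rw [← hasSum_nat_add_iff' 1] at hmean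
  convert! hmean using 1
  · ext k; push_cast; ring
  · field_simp; simp

theorem thermal_eq_geometric {n : ℝ} (hn : 1 + n ≠ 0) (k : ℕ) :
    n ^ k / (1 + n) ^ (k + 1) = (1 - n / (1 + n)) * (n / (1 + n)) ^ k := by
  rw [div_pow, pow_succ]
  field_simp
  ring

/-- Scalar content of the cancellation of the two traces in the second-order Taylor
term of the QPSK quantum relative entropy (`Tr[d²K̂_q/du²|₀] = 0`) for a thermal state
with Fock eigenvalues `t_k = n̄^k/(1+n̄)^{k+1}`. -/
theorem qpsk_second_order_cancellation (n : ℝ) (hn : 0 < n)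
    (t : ℕ → ℝ) (ht : ∀ k, t k = n ^ k / (1 + n) ^ (k + 1)) :
    (∑' k : ℕ, ((k : ℝ) + 1) * t k * t (k + 1) *
        ∫ s in (0:ℝ)..1, ((s * t k + (1 - s)) ^ 2)⁻¹ = n) ∧
    ((2 / n ^ 2) * ∑' k : ℕ, ((k : ℝ) + 1) * t k * t (k + 1) *
        (∫ s in (0:ℝ)..1, ((s * t k + (1 - s)) ^ 2)⁻¹) -
      (2 / n) * ∑' k : ℕ, t k ^ 2 *
        (∫ s in (0:ℝ)..1, ((s * t k + (1 - s)) ^ 2)⁻¹) = 0) := by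
  set x := n / (1 + n) with hx
  have hx₀ : 0 ≤ x := by positivity
  have hx₁ : x < 1 := (div_lt_one (by positivity)).2 (by linarith)
  have hmean : x / (1 - x) = n := by
    have : 1 + n ≠ 0 := by positivity
    rw [hx]
    field_simp
    ring
  have ht_geom (k : ℕ) : t k = (1 - x) * x ^ k :=
    (ht k).trans (thermal_eq_geometric (by positivity) k)
  have ht_pos (k : ℕ) : 0 < t k := by rw [ht k]; positivity
  have hint (k : ℕ) : ∫ s in (0:ℝ)..1, ((s * t k + (1 - s)) ^ 2)⁻¹ = (t k)⁻¹ :=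
    integral_inv_sq_affine (ht_pos k)
  have hsum₁ : ∑' k : ℕ, ((k : ℝ) + 1) * t k * t (k + 1) *
      ∫ s in (0:ℝ)..1, ((s * t k + (1 - s)) ^ 2)⁻¹ = n := by
    have hterm (k : ℕ) : ((k : ℝ) + 1) * t k * t (k + 1) * (t k)⁻¹ = (k + 1) * t (k + 1) := by
      field_simp [(ht_pos k).ne']
    simp_rw [hint, hterm, ht_geom]
    rw [(hasSum_succ_mul_geometric_pmf_succ hx₀ hx₁).tsum_eq, hmean]
  have hsum₂ : ∑' k : ℕ, t k ^ 2 * (∫ s in (0:ℝ)..1, ((s * t k + (1 - s)) ^ 2)⁻¹) = 1 := by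
    simp_rw [hint, sq, mul_inv_cancel_right₀ (ht_pos _).ne', ht_geom]
    exact (hasSum_geometric_pmf hx₀ hx₁).tsum_eq
  refine ⟨hsum₁, ?_⟩
  rw [hsum₁, hsum₂]
  field_simp
  ring
end

section
/- Let n̄ > 0 be a real number and define t_k = n̄^k/(1+n̄)^{k+1} for k ∈ ℕ. Then ∑_{k=2}^∞ k·(k−1)·t_k² · ∫₀¹ (s·t_k + (1−s))⁻¹·(s·t_{k−2} + (1−s))⁻¹ ds = (4n̄⁴/(1+2n̄))·log(1 + 1/n̄), where log is the natural logarithm. -/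
/-! For distinct positive `a`, `b` the integral `∫₀¹ ds / ((s a + 1 - s) (s b + 1 - s))` equals
`(log b - log a) / (b - a)`. For the thermal weights the ratio `t_{k-2} / t_k = (1 + 1/n̄)²` does not
depend on `k`, so the log difference is always `2 log (1 + 1/n̄)` and the `k`-th term is a constant
times `C(k, 2) xᵏ⁻²` with `x = n̄ / (1 + n̄)`. The negative binomial series
`∑ C(m + 2, 2) xᵐ = (1 - x)⁻³ = (1 + n̄)³` then sums the series. -/

open Real

lemma mul_add_one_sub_pos {c s : ℝ} (hc : 0 < c) (hs : s ∈ Set.Icc (0 : ℝ) 1) :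
    0 < s * c + (1 - s) := by
  rcases hs.2.lt_or_eq with hs1 | rfl
  · nlinarith [hs.1]
  · simpa using hc

lemma hasDerivAt_log_mul_add_one_sub {c s : ℝ} (h : s * c + (1 - s) ≠ 0) :
    HasDerivAt (fun y ↦ log (y * c + (1 - y))) ((c - 1) / (s * c + (1 - s))) s := by
  have hlin : HasDerivAt (fun y ↦ y * c + (1 - y)) (c - 1) s :=
    (((hasDerivAt_id' s).mul_const c).add ((hasDerivAt_id' s).const_sub 1)).congr_deriv (by ring)
  exact hlin.log h

theorem integral_inv_affine_mul_inv_affine {a b : ℝ} (ha : 0 < a) (hb : 0 < b) (hab : a ≠ b) :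
    ∫ s in (0 : ℝ)..1, (s * a + (1 - s))⁻¹ * (s * b + (1 - s))⁻¹ = (log b - log a) / (b - a) := by
  have hpos : ∀ {c}, 0 < c → ∀ s ∈ Set.uIcc (0 : ℝ) 1, 0 < s * c + (1 - s) := fun hc s hs ↦
    mul_add_one_sub_pos hc (by rwa [Set.uIcc_of_le zero_le_one] at hs)
  have hderiv : ∀ s ∈ Set.uIcc (0 : ℝ) 1,
      HasDerivAt (fun y ↦ (log (y * b + (1 - y)) - log (y * a + (1 - y))) / (b - a))
        ((s * a + (1 - s))⁻¹ * (s * b + (1 - s))⁻¹) s := by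
    intro s hs
    have ha' := (hpos ha s hs).ne'
    have hb' := (hpos hb s hs).ne'
    refine (((hasDerivAt_log_mul_add_one_sub hb').sub
      (hasDerivAt_log_mul_add_one_sub ha')).div_const (b - a)).congr_deriv ?_
    rw [div_sub_div _ _ hb' ha']
    field_simp [sub_ne_zero.mpr hab.symm]
    ring
  have hint : IntervalIntegrable (fun s : ℝ ↦ (s * a + (1 - s))⁻¹ * (s * b + (1 - s))⁻¹)
      MeasureTheory.volume 0 1 :=
    (ContinuousOn.mul (.inv₀ (by fun_prop) fun s hs ↦ (hpos ha s hs).ne')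
      (.inv₀ (by fun_prop) fun s hs ↦ (hpos hb s hs).ne')).intervalIntegrable
  rw [intervalIntegral.integral_eq_sub_of_hasDerivAt hderiv hint]
  simp

noncomputable def thermalWeight (n : ℝ) (k : ℕ) : ℝ := n ^ k / (1 + n) ^ (k + 1)

lemma thermalWeight_pos {n : ℝ} (hn : 0 < n) (k : ℕ) : 0 < thermalWeight n k := by
  unfold thermalWeight; positivity

lemma thermalWeight_sub_thermalWeight_add_two {n : ℝ} (hn : 1 + n ≠ 0) (m : ℕ) :
    thermalWeight n m - thermalWeight n (m + 2) = n ^ m * (1 + 2 * n) / (1 + n) ^ (m + 3) := by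
  unfold thermalWeight
  field_simp
  ring

lemma log_thermalWeight_sub_log_thermalWeight_add_two {n : ℝ} (hn : 0 < n) (m : ℕ) :
    log (thermalWeight n m) - log (thermalWeight n (m + 2)) = 2 * log (1 + 1 / n) := by
  have hratio : thermalWeight n m / thermalWeight n (m + 2) = (1 + 1 / n) ^ 2 := by
    unfold thermalWeight
    field_simp
    ring
  rw [← log_div (thermalWeight_pos hn m).ne' (thermalWeight_pos hn (m + 2)).ne', hratio, log_pow]
  norm_num

lemma thermal_trace_term_add_two {n : ℝ} (hn : 0 < n) (m : ℕ) :
    ((m + 2 : ℕ) : ℝ) * (((m + 2 : ℕ) : ℝ) - 1) * thermalWeight n (m + 2) ^ 2 *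
        ∫ s in (0 : ℝ)..1, (s * thermalWeight n (m + 2) + (1 - s))⁻¹ *
          (s * thermalWeight n m + (1 - s))⁻¹ =
      4 * n ^ 4 * log (1 + 1 / n) / ((1 + 2 * n) * (1 + n) ^ 3) *
        ((m + 2).choose 2 * (n / (1 + n)) ^ m) := by
  have h1n : 0 < 1 + n := by linarith
  have hdiff := thermalWeight_sub_thermalWeight_add_two h1n.ne' m
  have hne : thermalWeight n (m + 2) ≠ thermalWeight n m := by
    rw [← sub_ne_zero, ← neg_sub, neg_ne_zero, hdiff]; positivity
  rw [integral_inv_affine_mul_inv_affine (thermalWeight_pos hn _) (thermalWeight_pos hn _) hne,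
    log_thermalWeight_sub_log_thermalWeight_add_two hn,
    hdiff, Nat.cast_choose_two, div_pow]
  generalize log (1 + 1 / n) = L
  unfold thermalWeight
  field_simp
  ring

/-- Scalar content of `Tr[â² ρ̂₀ ∫₀¹ ds σ̂₀⁻¹(s) ρ̂₀ (â†)² σ̂₀⁻¹(s)]`:
`∑_{k=2}^∞ k(k−1) t_k² ∫₀¹ (s t_k + (1−s))⁻¹ (s t_{k−2} + (1−s))⁻¹ ds
  = (4n̄⁴/(1+2n̄)) log(1+1/n̄)` (the `k = 0, 1` terms vanish since `k(k−1) = 0`). -/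
theorem bpsk_trace_series_one (n : ℝ) (hn : 0 < n)
    (t : ℕ → ℝ) (ht : ∀ k, t k = n ^ k / (1 + n) ^ (k + 1)) :
    ∑' k : ℕ, (k : ℝ) * ((k : ℝ) - 1) * t k ^ 2 *
        ∫ s in (0:ℝ)..1, (s * t k + (1 - s))⁻¹ * (s * t (k - 2) + (1 - s))⁻¹ =
      (4 * n ^ 4 / (1 + 2 * n)) * Real.log (1 + 1 / n) := by
  obtain rfl : t = thermalWeight n := funext ht
  have h1n : 0 < 1 + n := by linarith
  have hx : ‖n / (1 + n)‖ < 1 := by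
    rw [norm_of_nonneg (by positivity), div_lt_one h1n]
    linarith
  set C := 4 * n ^ 4 * log (1 + 1 / n) / ((1 + 2 * n) * (1 + n) ^ 3)
  have htail := (hasSum_choose_mul_geometric_of_norm_lt_one 2 hx).mul_left C
  rw [((hasSum_nat_add_iff (g := C * (1 / (1 - n / (1 + n)) ^ (2 + 1))) 2).mp ?_).tsum_eq]
  · have h1x : 1 - n / (1 + n) = 1 / (1 + n) := by field_simp; ring
    simp [Finset.sum_range_succ, h1x, C]
    field_simp
  · simpa only [thermal_trace_term_add_two hn, Nat.add_sub_cancel] using htail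
end

section
/- Let n̄ > 0 be a real number and define t_k = n̄^k/(1+n̄)^{k+1} for k ∈ ℕ. Then ∑_{k=0}^∞ (k+1)·(k+2)·t_k·t_{k+2}² · ∫₀¹ s·(s·t_k + (1−s))⁻²·(s·t_{k+2} + (1−s))⁻¹ ds = (4n̄⁴·(1+n̄)²/(1+2n̄)²)·log(1 + 1/n̄) − 2n̄⁴/(1+2n̄), where log is the natural logarithm. -/
/-!
Both factors `s t + (1 - s)` of the integrand are affine in `s`, so partial fractions evaluate the
integral in closed form for any two distinct positive parameters. Since `t` is geometric with
ratio `x = n / (1 + n)`, the `k`-th term is then `(k + 1) (k + 2) x ^ k` times a constant, and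
`∑ (k + 1) (k + 2) x ^ k = 2 / (1 - x) ^ 3` sums the series.
-/

open Real

lemma integral_mul_inv_sq_mul_inv {a b : ℝ} (ha : 0 < a) (hb : 0 < b) (hab : a ≠ b) :
    ∫ s in (0:ℝ)..1, s * ((s * a + (1 - s)) ^ 2)⁻¹ * (s * b + (1 - s))⁻¹ =
      log (a / b) / (a - b) ^ 2 - 1 / ((a - b) * a) := by
  have pos : ∀ {c : ℝ}, 0 < c → ∀ s ∈ Set.uIcc (0:ℝ) 1, 0 < s * c + (1 - s) := by
    intro c hc s hs
    rw [Set.uIcc_of_le zero_le_one] at hs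
    rcases hs.2.lt_or_eq with hs1 | rfl
    · nlinarith [mul_nonneg hs.1 hc.le]
    · simpa using hc
  have hasDerivAt_affine : ∀ (c s : ℝ), HasDerivAt (fun s => s * c + (1 - s)) (c - 1) s :=
    fun c s => (((hasDerivAt_id s).mul_const c).add ((hasDerivAt_id s).const_sub 1)).congr_deriv
      (by ring)
  have hab' : a - b ≠ 0 := sub_ne_zero.mpr hab
  -- `s / (A² B) = (a - b)⁻¹ (1 / (A B) - 1 / A²)` for the affine factors `A`, `B`
  have deriv : ∀ s ∈ Set.uIcc (0:ℝ) 1, HasDerivAt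
      (fun s => (log (s * a + (1 - s)) - log (s * b + (1 - s))) / (a - b) ^ 2
        - s / ((a - b) * (s * a + (1 - s))))
      (s * ((s * a + (1 - s)) ^ 2)⁻¹ * (s * b + (1 - s))⁻¹) s := by
    intro s hs
    have hA := (pos ha s hs).ne'
    have hB := (pos hb s hs).ne'
    refine (((((hasDerivAt_affine a s).log hA).sub ((hasDerivAt_affine b s).log hB)).div_const
      _).sub ((hasDerivAt_id' s).div ((hasDerivAt_affine a s).const_mul (a - b))
        (mul_ne_zero hab' hA))).congr_deriv ?_
    set A := s * a + (1 - s)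
    set B := s * b + (1 - s)
    field_simp
    simp only [A, B]
    ring
  have cont : ContinuousOn (fun s => s * ((s * a + (1 - s)) ^ 2)⁻¹ * (s * b + (1 - s))⁻¹)
      (Set.uIcc 0 1) := by
    refine ContinuousOn.mul (continuousOn_id.mul (ContinuousOn.inv₀ (by fun_prop) ?_))
      (ContinuousOn.inv₀ (by fun_prop) fun s hs => (pos hb s hs).ne')
    exact fun s hs => pow_ne_zero 2 (pos ha s hs).ne'
  rw [intervalIntegral.integral_eq_sub_of_hasDerivAt deriv cont.intervalIntegrable,
    log_div ha.ne' hb.ne']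
  simp

lemma hasSum_succ_mul_succ_succ_mul_geometric {𝕜 : Type*} [NormedField 𝕜] [CharZero 𝕜]
    [HasSummableGeomSeries 𝕜] {x : 𝕜} (hx : ‖x‖ < 1) :
    HasSum (fun k : ℕ => ((k : 𝕜) + 1) * ((k : 𝕜) + 2) * x ^ k) (2 / (1 - x) ^ 3) := by
  have choose_two :
      ∀ k : ℕ, ((k : 𝕜) + 1) * ((k : 𝕜) + 2) = 2 * ((k + 2).choose 2 : ℕ) := by
    intro k
    rw [Nat.cast_choose_two]
    push_cast
    ring
  simp only [choose_two, mul_assoc]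
  rw [div_eq_mul_one_div]
  exact (hasSum_choose_mul_geometric_of_norm_lt_one 2 hx).mul_left 2

noncomputable def traceSummand (t : ℕ → ℝ) (k : ℕ) : ℝ :=
  ((k : ℝ) + 1) * ((k : ℝ) + 2) * t k * t (k + 2) ^ 2 *
    ∫ s in (0:ℝ)..1, s * ((s * t k + (1 - s)) ^ 2)⁻¹ * (s * t (k + 2) + (1 - s))⁻¹

section Geometric

variable {C x : ℝ} {t : ℕ → ℝ}

lemma traceSummand_of_geometric (hC : 0 < C) (hx : 0 < x) (hx1 : x ≠ 1)
    (ht : ∀ k, t k = C * x ^ k) (k : ℕ) :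
    traceSummand t k = ((k : ℝ) + 1) * ((k : ℝ) + 2) * x ^ k *
      (C * x ^ 4 * (-2 * log x / (1 - x ^ 2) ^ 2 - 1 / (1 - x ^ 2))) := by
  have hsq : x ^ 2 ≠ 1 := (pow_eq_one_iff_of_nonneg hx.le two_ne_zero).not.mpr hx1
  have hx2 : 1 - x ^ 2 ≠ 0 := sub_ne_zero.mpr hsq.symm
  have hdiff : t k - t (k + 2) = C * x ^ k * (1 - x ^ 2) := by
    rw [ht, ht]
    ring
  have hne : t k ≠ t (k + 2) := by
    rw [← sub_ne_zero, hdiff]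
    exact mul_ne_zero (by positivity) hx2
  have ratio : t k / t (k + 2) = (x ^ 2)⁻¹ := by
    rw [ht, ht]
    field_simp
    ring
  rw [traceSummand, integral_mul_inv_sq_mul_inv (ht k ▸ by positivity)
    (ht (k + 2) ▸ by positivity) hne, ratio, log_inv, log_pow, hdiff, ht, ht]
  field_simp
  ring

lemma tsum_traceSummand_of_geometric (hC : 0 < C) (hx : 0 < x) (hx1 : x < 1)
    (ht : ∀ k, t k = C * x ^ k) :
    ∑' k, traceSummand t k =
      2 / (1 - x) ^ 3 * (C * x ^ 4 * (-2 * log x / (1 - x ^ 2) ^ 2 - 1 / (1 - x ^ 2))) := by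
  have hx_norm : ‖x‖ < 1 := by rwa [norm_of_nonneg hx.le]
  simp only [traceSummand_of_geometric hC hx hx1.ne ht]
  exact ((hasSum_succ_mul_succ_succ_mul_geometric hx_norm).mul_right _).tsum_eq

end Geometric

/-- Scalar content of `Tr[ρ̂₀ ∫₀¹ s ds σ̂₀⁻¹(s) â² ρ̂₀ σ̂₀⁻¹(s) ρ̂₀ (â†)² σ̂₀⁻¹(s)]`:
`∑_k (k+1)(k+2) t_k t_{k+2}² ∫₀¹ s (s t_k + (1−s))⁻² (s t_{k+2} + (1−s))⁻¹ ds
  = (4n̄⁴(1+n̄)²/(1+2n̄)²) log(1+1/n̄) − 2n̄⁴/(1+2n̄)`. -/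
theorem bpsk_trace_series_two (n : ℝ) (hn : 0 < n)
    (t : ℕ → ℝ) (ht : ∀ k, t k = n ^ k / (1 + n) ^ (k + 1)) :
    ∑' k : ℕ, ((k : ℝ) + 1) * ((k : ℝ) + 2) * t k * t (k + 2) ^ 2 *
        ∫ s in (0:ℝ)..1, s * ((s * t k + (1 - s)) ^ 2)⁻¹ * (s * t (k + 2) + (1 - s))⁻¹ =
      (4 * n ^ 4 * (1 + n) ^ 2 / (1 + 2 * n) ^ 2) * Real.log (1 + 1 / n) -
        2 * n ^ 4 / (1 + 2 * n) := by
  have hn1 : 0 < 1 + n := by linarith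
  have ht' : ∀ k, t k = (1 + n)⁻¹ * (n / (1 + n)) ^ k := by
    intro k
    rw [ht, div_pow, pow_succ]
    field_simp
  change ∑' k, traceSummand t k = _
  rw [tsum_traceSummand_of_geometric (inv_pos.mpr hn1) (div_pos hn hn1)
    ((div_lt_one hn1).mpr (by linarith)) ht']
  have hlog : log (n / (1 + n)) = -log (1 + 1 / n) := by
    rw [← log_inv]
    congr 1
    field_simp
    ring
  have h1x : 1 - n / (1 + n) = (1 + n)⁻¹ := by
    field_simp
    ring
  have h1x2 : 1 - (n / (1 + n)) ^ 2 = (1 + 2 * n) / (1 + n) ^ 2 := by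
    field_simp
    ring
  have h2n : 1 + 2 * n ≠ 0 := by positivity
  rw [hlog, h1x, h1x2]
  field_simp
  ring
end
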